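/- arXiv:math/0412291 — 7 statements merged into one kernel-verified Lean document; each statement's English description precedes it below -/
import Mathlib

section
/- Define G_n(v) = (∏_{k=0}^{n-1}(k+1/2-iv)) / (∏_{k=0}^{n}(k+1/2+iv)). Then the family {G_k}_{k≥0} is orthogonal in L^2(ℝ, dv/(2π)): (1/(2π)) ∫_{-∞}^∞ G_j(v) conj(G_k(v)) dv = δ_{jk}/(2k+1). -/
open MeasureTheory Complex Finset

/-- `G_n(v) = (∏_{k=0}^{n-1}(k+1/2-iv)) / (∏_{k=0}^{n}(k+1/2+iv))`. -/
noncomputable def GIOU (n : ℕ) (v : ℝ) : ℂ :=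
  (∏ k ∈ Finset.range n, ((k : ℂ) + 1 / 2 - Complex.I * v)) /
    (∏ k ∈ Finset.range (n + 1), ((k : ℂ) + 1 / 2 + Complex.I * v))

/-! ### Auxiliary definitions -/

noncomputable def Pm (j k : ℕ) (v : ℝ) : ℂ :=
  ∏ m ∈ Finset.Ico j k, ((m : ℂ) + 1 / 2 - Complex.I * v)

noncomputable def Qp (j k : ℕ) (v : ℝ) : ℂ :=
  ∏ m ∈ Finset.Ico j k, ((m : ℂ) + 1 / 2 + Complex.I * v)

lemma fact_sub_ne (m : ℕ) (v : ℝ) : ((m : ℂ) + 1 / 2 - Complex.I * v) ≠ 0 := by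
  intro h
  have h1 := congrArg Complex.re h
  simp at h1
  have : (0:ℝ) ≤ (m:ℝ) := Nat.cast_nonneg m
  linarith

lemma fact_add_ne (m : ℕ) (v : ℝ) : ((m : ℂ) + 1 / 2 + Complex.I * v) ≠ 0 := by
  intro h
  have h1 := congrArg Complex.re h
  simp at h1
  have : (0:ℝ) ≤ (m:ℝ) := Nat.cast_nonneg m
  linarith

lemma Pm_ne_zero (j k : ℕ) (v : ℝ) : Pm j k v ≠ 0 :=
  Finset.prod_ne_zero_iff.mpr (fun m _ => fact_sub_ne m v)

lemma Qp_ne_zero (j k : ℕ) (v : ℝ) : Qp j k v ≠ 0 :=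
  Finset.prod_ne_zero_iff.mpr (fun m _ => fact_add_ne m v)

lemma Qp_empty (a b : ℕ) (v : ℝ) (h : b ≤ a) : Qp a b v = 1 := by
  unfold Qp
  rw [Finset.Ico_eq_empty (by omega), Finset.prod_empty]

/-! ### Real integral computations -/

lemma inv_lin (x v : ℝ) (hx : x^2+v^2 ≠ 0) :
    ((x:ℂ) - Complex.I * v)⁻¹ = ((x/(x^2+v^2) : ℝ):ℂ) + Complex.I * ((v/(x^2+v^2) : ℝ):ℂ) := by
  have hne : ((x:ℂ) - Complex.I*v) ≠ 0 := by
    intro h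
    have h1 := congrArg Complex.re h
    simp at h1
    have h2 := congrArg Complex.im h
    simp [h1] at h2
    simp [h1, h2] at hx
  have hc : ((x:ℂ)^2 + (v:ℂ)^2) ≠ 0 := by
    have h3 : (((x^2+v^2 : ℝ)):ℂ) ≠ 0 := Complex.ofReal_ne_zero.mpr hx
    push_cast at h3; exact h3
  rw [inv_eq_one_div, div_eq_iff hne]
  push_cast
  field_simp
  ring_nf
  simp [Complex.I_sq]

lemma lorentz_int {a : ℝ} (ha : 0 < a) :
    Integrable (fun v : ℝ => a / (a^2 + v^2)) := by
  have h : (fun v : ℝ => a / (a^2 + v^2)) = fun v : ℝ => a⁻¹ * ((1 + (v/a)^2)⁻¹) := by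
    funext v
    have : a^2+v^2 ≠ 0 := by positivity
    field_simp
  rw [h]
  exact (integrable_inv_one_add_sq.comp_div ha.ne').const_mul _

lemma lorentz_val {a : ℝ} (ha : 0 < a) :
    ∫ v : ℝ, a / (a^2 + v^2) = Real.pi := by
  have h : (fun v : ℝ => a / (a^2 + v^2)) = fun v : ℝ => a⁻¹ * ((1 + (v/a)^2)⁻¹) := by
    funext v
    have : a^2+v^2 ≠ 0 := by positivity
    field_simp
  rw [h, MeasureTheory.integral_const_mul,
    MeasureTheory.Measure.integral_comp_div (fun y : ℝ => (1+y^2)⁻¹) a,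
    integral_univ_inv_one_add_sq, smul_eq_mul, abs_of_pos ha]
  field_simp

lemma lorentz2_int {a : ℝ} (ha : 0 < a) :
    Integrable (fun v : ℝ => ((a^2 + v^2)⁻¹ : ℝ)) := by
  have h : (fun v : ℝ => ((a^2 + v^2)⁻¹:ℝ)) = fun v : ℝ => a⁻¹ * (a/(a^2+v^2)) := by
    funext v
    have : a^2+v^2 ≠ 0 := by positivity
    field_simp
  rw [h]
  exact (lorentz_int ha).const_mul _

lemma lorentz2_val {a : ℝ} (ha : 0 < a) :
    ∫ v : ℝ, ((a^2 + v^2)⁻¹ : ℝ) = Real.pi / a := by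
  have h : (fun v : ℝ => ((a^2 + v^2)⁻¹:ℝ)) = fun v : ℝ => a⁻¹ * (a/(a^2+v^2)) := by
    funext v
    have : a^2+v^2 ≠ 0 := by positivity
    field_simp
  rw [h, MeasureTheory.integral_const_mul, lorentz_val ha]
  ring

lemma odd_zero {g : ℝ → ℝ} (hodd : ∀ v, g (-v) = - g v) : ∫ v : ℝ, g v = 0 := by
  have h1 : ∫ v : ℝ, g (-v) = ∫ v : ℝ, g v := integral_neg_eq_self g _
  simp only [hodd, integral_neg] at h1
  linarith

/-! ### The base case -/

lemma base_pair {a b : ℝ} (ha : 1/2 ≤ a) (hb : b = a + 1) :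
    Integrable (fun v : ℝ => (((a:ℂ) - Complex.I*v) * ((b:ℂ) - Complex.I*v))⁻¹) ∧
    ∫ v : ℝ, (((a:ℂ) - Complex.I*v) * ((b:ℂ) - Complex.I*v))⁻¹ = 0 := by
  have ha0 : 0 < a := by linarith
  have hb0 : 0 < b := by linarith
  set g₁ : ℝ → ℝ := fun v => a/(a^2+v^2) - b/(b^2+v^2) with hg₁
  set g₂ : ℝ → ℝ := fun v => v/(a^2+v^2) - v/(b^2+v^2) with hg₂
  have hpt : ∀ v : ℝ, (((a:ℂ) - Complex.I*v) * ((b:ℂ) - Complex.I*v))⁻¹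
      = ((g₁ v : ℝ):ℂ) + Complex.I * ((g₂ v : ℝ):ℂ) := by
    intro v
    have hA : ((a:ℂ) - Complex.I*v) ≠ 0 := by
      intro h
      have h1 := congrArg Complex.re h
      simp at h1; linarith
    have hB : ((b:ℂ) - Complex.I*v) ≠ 0 := by
      intro h
      have h1 := congrArg Complex.re h
      simp at h1; linarith
    have key : (((a:ℂ) - Complex.I*v) * ((b:ℂ) - Complex.I*v))⁻¹
        = ((a:ℂ) - Complex.I*v)⁻¹ - ((b:ℂ) - Complex.I*v)⁻¹ := by
      field_simp
      rw [hb]; push_cast; ring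
    rw [key, inv_lin a v (by positivity), inv_lin b v (by positivity), hg₁, hg₂]
    push_cast
    ring
  have hia : Integrable g₁ := (lorentz_int ha0).sub (lorentz_int hb0)
  have hva : ∫ v : ℝ, g₁ v = 0 := by
    rw [hg₁]
    rw [integral_sub (lorentz_int ha0) (lorentz_int hb0), lorentz_val ha0, lorentz_val hb0]
    ring
  have hg2eq : ∀ v : ℝ, g₂ v = (v * (b^2 - a^2))/((a^2+v^2)*(b^2+v^2)) := by
    intro v
    have h1 : a^2+v^2 ≠ 0 := by positivity
    have h2 : b^2+v^2 ≠ 0 := by positivity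
    rw [hg₂]
    field_simp
    ring
  have hg2cont : Continuous g₂ := by
    apply Continuous.sub
    · exact continuous_id.div (by fun_prop) (fun v => by positivity)
    · exact continuous_id.div (by fun_prop) (fun v => by positivity)
  have hib : Integrable g₂ := by
    apply Integrable.mono (integrable_inv_one_add_sq.const_mul (b^2-a^2))
      hg2cont.aestronglyMeasurable
    filter_upwards with v
    rw [Real.norm_eq_abs, Real.norm_eq_abs]
    refine le_trans ?_ (le_abs_self _)
    have h1 : |v| ≤ a^2+v^2 := by
      nlinarith [sq_nonneg (|v| - 1/2), _root_.sq_abs v, abs_nonneg v]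
    have h2 : 1+v^2 ≤ b^2+v^2 := by nlinarith
    have hba : (0:ℝ) < b^2 - a^2 := by nlinarith
    have hd3 : (0:ℝ) < 1+v^2 := by positivity
    rw [hg2eq v, abs_div, abs_mul, abs_of_pos hba,
      abs_of_pos (by positivity : (0:ℝ) < (a^2+v^2)*(b^2+v^2)),
      inv_eq_one_div, mul_one_div, div_le_div_iff₀ (by positivity) hd3]
    have e1 : |v| * (1+v^2) ≤ (a^2+v^2)*(b^2+v^2) := by nlinarith [abs_nonneg v]
    nlinarith [mul_le_mul_of_nonneg_left e1 hba.le]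
  have hvb : ∫ v : ℝ, g₂ v = 0 := by
    apply odd_zero
    intro v
    rw [hg₂]
    simp only [neg_sq]
    ring
  have hint : Integrable (fun v : ℝ => ((g₁ v : ℝ):ℂ) + Complex.I * ((g₂ v:ℝ):ℂ)) :=
    (hia.ofReal).add ((hib.ofReal).const_mul Complex.I)
  constructor
  · exact hint.congr (Filter.Eventually.of_forall fun v => (hpt v).symm)
  · rw [show (fun v : ℝ => (((a:ℂ) - Complex.I*v) * ((b:ℂ) - Complex.I*v))⁻¹)
        = fun v : ℝ => ((g₁ v : ℝ):ℂ) + Complex.I * ((g₂ v:ℝ):ℂ) from funext hpt]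
    rw [integral_add (f := fun v => ((g₁ v :ℝ):ℂ)) (g := fun v => Complex.I * ((g₂ v:ℝ):ℂ))
        (by exact hia.ofReal) (by exact (hib.ofReal).const_mul Complex.I),
      MeasureTheory.integral_const_mul]
    rw [show ∫ (v:ℝ), ((g₁ v :ℝ):ℂ) = ((∫ v:ℝ, g₁ v :ℝ):ℂ) from integral_ofReal,
        show ∫ (v:ℝ), ((g₂ v :ℝ):ℂ) = ((∫ v:ℝ, g₂ v :ℝ):ℂ) from integral_ofReal, hva, hvb]
    simp

/-! ### Key algebraic identities -/

lemma keyA (X Y C D E : ℂ) (hX : X ≠ 0) (hY : Y ≠ 0) (hC : C ≠ 0) (hE : E ≠ 0)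
    (hrel : X * C = D * Y) (hcd : C - D = E) :
    1/(X*C) = E⁻¹ * (1/X) - E⁻¹ * (1/Y) := by
  field_simp
  linear_combination (-Y)*hcd + hrel

lemma keyB (Q X B C w : ℂ) (hX : X ≠ 0) (hCw : C - w ≠ 0) :
    Q*(B+w)/(X*(C-w)) = -(Q/X) + (B+C)*(Q/(X*(C-w))) := by
  field_simp
  ring

/-! ### The main induction -/

lemma main_ind : ∀ d q j : ℕ, q ≤ j + d + 1 →
    Integrable (fun v : ℝ => Qp (j+1) q v / Pm j (j+d+2) v) ∧
    ∫ v : ℝ, Qp (j+1) q v / Pm j (j+d+2) v = 0 := by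
  intro d
  induction d using Nat.strong_induction_on with
  | _ d ihd =>
  intro q
  induction q using Nat.strong_induction_on with
  | _ q ihq =>
  intro j hq
  by_cases hq2 : q ≤ j + 1
  · -- empty numerator
    rcases d with _ | e
    · -- d = 0 : base case
      have ha : (1:ℝ)/2 ≤ (j:ℝ)+1/2 := by
        have : (0:ℝ) ≤ (j:ℝ) := Nat.cast_nonneg j
        linarith
      have hb := base_pair (a := (j:ℝ)+1/2) (b := (j:ℝ)+1/2+1) ha rfl
      have hPm : (fun v : ℝ => Qp (j+1) q v / Pm j (j+0+2) v)
          = fun v : ℝ => ((((((j:ℝ)+1/2:ℝ)):ℂ) - Complex.I*v) *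
              (((((j:ℝ)+1/2+1:ℝ)):ℂ) - Complex.I*v))⁻¹ := by
        funext v
        rw [Qp_empty _ _ _ (by omega)]
        unfold Pm
        rw [show j+0+2 = (j+1)+1 from rfl,
          Finset.prod_Ico_succ_top (by omega), Nat.Ico_succ_singleton j,
          Finset.prod_singleton, one_div]
        congr 2
        · push_cast; ring
        · push_cast; ring
      rw [hPm]
      exact hb
    · -- d = e+1 : split off the bottom factor
      have h1 := ihd e (by omega) 0 j (by omega)
      have h2 := ihd e (by omega) 0 (j+1) (by omega)
      have hpt : (fun v : ℝ => Qp (j+1) q v / Pm j (j+(e+1)+2) v)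
          = fun v : ℝ => ((e:ℂ)+2)⁻¹ * (Qp (j+1) 0 v / Pm j (j+e+2) v)
              - ((e:ℂ)+2)⁻¹ * (Qp (j+1+1) 0 v / Pm (j+1) (j+1+e+2) v) := by
        funext v
        rw [Qp_empty _ _ _ (by omega), Qp_empty _ _ _ (by omega), Qp_empty _ _ _ (by omega)]
        have hsplit1 : Pm j (j+(e+1)+2) v
            = Pm j (j+e+2) v * (((j+e+2:ℕ):ℂ)+1/2 - Complex.I*v) := by
          unfold Pm
          rw [show j+(e+1)+2 = (j+e+2)+1 from by omega]
          exact Finset.prod_Ico_succ_top (by omega) _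
        have hsplit2 : Pm j (j+(e+1)+2) v
            = ((j:ℂ)+1/2 - Complex.I*v) * Pm (j+1) (j+1+e+2) v := by
          unfold Pm
          rw [show j+(e+1)+2 = j+1+e+2 from by omega]
          exact Finset.prod_eq_prod_Ico_succ_bot (by omega) _
        rw [div_eq_mul_inv, one_mul, ← one_div, hsplit1]
        refine keyA _ _ _ ((j:ℂ)+1/2 - Complex.I*v) _ (Pm_ne_zero _ _ _) (Pm_ne_zero _ _ _)
          (fact_sub_ne _ _) ?_ (hsplit1.symm.trans hsplit2) ?_
        · intro h
          have h1 := congrArg Complex.re h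
          simp at h1
          have : (0:ℝ) ≤ (e:ℝ) := Nat.cast_nonneg e
          linarith
        · push_cast; ring
      rw [hpt]
      constructor
      · exact (h1.1.const_mul _).sub (h2.1.const_mul _)
      · rw [integral_sub (h1.1.const_mul _) (h2.1.const_mul _),
          MeasureTheory.integral_const_mul, MeasureTheory.integral_const_mul, h1.2, h2.2]
        simp
  · -- nonempty numerator
    obtain ⟨r, rfl⟩ : ∃ r, q = r+1 := ⟨q-1, by omega⟩
    obtain ⟨e, rfl⟩ : ∃ e, d = e+1 := ⟨d-1, by omega⟩
    have h1 := ihd e (by omega) r j (by omega)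
    have h2 := ihq r (by omega) j (by omega)
    have hpt : (fun v : ℝ => Qp (j+1) (r+1) v / Pm j (j+(e+1)+2) v)
        = fun v : ℝ => -(Qp (j+1) r v / Pm j (j+e+2) v)
            + (((r:ℂ)+1/2) + (((j+e+2:ℕ):ℂ)+1/2))
              * (Qp (j+1) r v / Pm j (j+(e+1)+2) v) := by
      funext v
      have hQtop : Qp (j+1) (r+1) v = Qp (j+1) r v * ((r:ℂ)+1/2 + Complex.I*v) := by
        unfold Qp
        exact Finset.prod_Ico_succ_top (by omega) _
      have hPtop : Pm j (j+(e+1)+2) v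
          = Pm j (j+e+2) v * (((j+e+2:ℕ):ℂ)+1/2 - Complex.I*v) := by
        unfold Pm
        rw [show j+(e+1)+2 = (j+e+2)+1 from by omega]
        exact Finset.prod_Ico_succ_top (by omega) _
      rw [hQtop]
      nth_rewrite 1 [hPtop]
      rw [show (Qp (j+1) r v * ((r:ℂ)+1/2 + Complex.I*v))
          = Qp (j+1) r v * (((r:ℂ)+1/2) + Complex.I*(v:ℝ)) from rfl]
      rw [hPtop]
      exact keyB _ _ _ _ _ (Pm_ne_zero _ _ _) (fact_sub_ne _ _)
    rw [hpt]
    constructor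
    · exact (h1.1.neg).add (h2.1.const_mul _)
    · rw [integral_add (f := fun v => -(Qp (j+1) r v / Pm j (j+e+2) v))
          (g := fun v => (((r:ℂ)+1/2) + (((j+e+2:ℕ):ℂ)+1/2)) * (Qp (j+1) r v / Pm j (j+(e+1)+2) v))
          (by exact h1.1.neg) (by exact h2.1.const_mul _), integral_neg,
        MeasureTheory.integral_const_mul, h1.2, h2.2]
      simp

/-! ### Pointwise identifications -/

lemma GIOU_eq (n : ℕ) (v : ℝ) : GIOU n v = Pm 0 n v / Qp 0 (n+1) v := by
  unfold GIOU Pm Qp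
  rw [Finset.range_eq_Ico, Finset.range_eq_Ico]

lemma conj_GIOU (n : ℕ) (v : ℝ) :
    (starRingEnd ℂ) (GIOU n v) = Qp 0 n v / Pm 0 (n+1) v := by
  rw [GIOU_eq]
  unfold Pm Qp
  rw [map_div₀, map_prod, map_prod]
  congr 1
  · refine Finset.prod_congr rfl fun m _ => ?_
    simp [map_sub, map_add, map_mul, map_ofNat, Complex.conj_I]
    try ring
  · refine Finset.prod_congr rfl fun m _ => ?_
    simp [map_sub, map_add, map_mul, map_ofNat, Complex.conj_I]
    try ring

lemma offdiag_pt {j k : ℕ} (h : j < k) (v : ℝ) :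
    GIOU j v * (starRingEnd ℂ) (GIOU k v) = Qp (j+1) k v / Pm j (k+1) v := by
  rw [conj_GIOU, GIOU_eq]
  have e1 : Qp 0 (j+1) v * Qp (j+1) k v = Qp 0 k v :=
    Finset.prod_Ico_consecutive _ (by omega) (by omega)
  have e2 : Pm 0 j v * Pm j (k+1) v = Pm 0 (k+1) v :=
    Finset.prod_Ico_consecutive _ (by omega) (by omega)
  rw [div_mul_div_comm, ← e1, ← e2]
  have n1 := Pm_ne_zero 0 j v
  have n2 := Pm_ne_zero j (k+1) v
  have n3 := Qp_ne_zero 0 (j+1) v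
  have n4 := Qp_ne_zero (j+1) k v
  field_simp

lemma diag_pt (k : ℕ) (v : ℝ) :
    GIOU k v * (starRingEnd ℂ) (GIOU k v) = (((((k:ℝ)+1/2)^2 + v^2 : ℝ)):ℂ)⁻¹ := by
  rw [conj_GIOU, GIOU_eq, div_mul_div_comm]
  have key : ∀ n : ℕ, Pm 0 n v * Qp 0 n v
      = ∏ m ∈ Finset.Ico 0 n, ((((m:ℝ)+1/2)^2 + v^2 : ℝ) : ℂ) := by
    intro n
    unfold Pm Qp
    rw [← Finset.prod_mul_distrib]
    refine Finset.prod_congr rfl fun m _ => ?_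
    push_cast
    linear_combination (-(v:ℂ)^2) * Complex.I_sq
  have hprod_ne : (∏ m ∈ Finset.Ico 0 k, ((((m:ℝ)+1/2)^2 + v^2 : ℝ) : ℂ)) ≠ 0 :=
    Finset.prod_ne_zero_iff.mpr fun m _ =>
      Complex.ofReal_ne_zero.mpr (by positivity)
  rw [mul_comm (Qp 0 (k+1) v) (Pm 0 (k+1) v), key, key,
    Finset.prod_Ico_succ_top (by omega)]
  rw [div_mul_cancel_left₀ hprod_ne]

/-! ### The off-diagonal integral -/

lemma offdiag_int {j k : ℕ} (h : j < k) :
    ∫ v : ℝ, GIOU j v * (starRingEnd ℂ) (GIOU k v) = 0 := by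
  obtain ⟨d, rfl⟩ : ∃ d, k = j+d+1 := ⟨k-j-1, by omega⟩
  have hm := main_ind d (j+d+1) j (by omega)
  calc ∫ v : ℝ, GIOU j v * (starRingEnd ℂ) (GIOU (j+d+1) v)
      = ∫ v : ℝ, Qp (j+1) (j+d+1) v / Pm j (j+d+2) v := by
        exact integral_congr_ae (Filter.Eventually.of_forall fun v => offdiag_pt h v)
    _ = 0 := hm.2

/-! ### Main theorem -/

/-- the family `{G_k}` is orthogonal in `L²(ℝ, dv/2π)`:
`(1/2π) ∫ G_j conj(G_k) dv = δ_{jk}/(2k+1)`. -/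
theorem stmt_7 (j k : ℕ) :
    (1 / (2 * Real.pi) : ℂ) * (∫ v : ℝ, GIOU j v * starRingEnd ℂ (GIOU k v))
      = if j = k then (1 : ℂ) / (2 * k + 1) else 0 := by
  by_cases hjk : j = k
  · subst hjk
    rw [if_pos rfl]
    have ha : (0:ℝ) < (j:ℝ)+1/2 := by positivity
    have hval : ∫ v : ℝ, GIOU j v * starRingEnd ℂ (GIOU j v)
        = ((Real.pi / ((j:ℝ)+1/2) : ℝ) : ℂ) := by
      calc ∫ v : ℝ, GIOU j v * starRingEnd ℂ (GIOU j v)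
          = ∫ v : ℝ, ((((((j:ℝ)+1/2)^2 + v^2 : ℝ))⁻¹ : ℝ) : ℂ) := by
            exact integral_congr_ae (Filter.Eventually.of_forall fun v =>
              (diag_pt j v).trans (Complex.ofReal_inv _).symm)
        _ = ((∫ v : ℝ, ((((j:ℝ)+1/2)^2 + v^2 : ℝ))⁻¹ : ℝ) : ℂ) := integral_ofReal
        _ = ((Real.pi / ((j:ℝ)+1/2) : ℝ) : ℂ) := by rw [lorentz2_val ha]
    rw [hval]
    have hπc : ((Real.pi : ℝ):ℂ) ≠ 0 := Complex.ofReal_ne_zero.mpr Real.pi_ne_zero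
    have hac : (((j:ℝ)+1/2 : ℝ):ℂ) ≠ 0 := Complex.ofReal_ne_zero.mpr ha.ne'
    have h2k : ((2*(j:ℕ)+1 : ℕ):ℂ) ≠ 0 := Nat.cast_ne_zero.mpr (by omega)
    rw [Complex.ofReal_div, div_mul_div_comm, one_mul]
    rw [div_eq_div_iff (mul_ne_zero (mul_ne_zero two_ne_zero hπc) hac)
      (by push_cast at h2k ⊢; exact h2k)]
    push_cast
    ring
  · rw [if_neg hjk]
    rcases Nat.lt_or_ge j k with hlt | hge
    · rw [offdiag_int hlt, mul_zero]
    · have hkj : k < j := by omega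
      have h0 := offdiag_int hkj
      have hconj : ∫ v : ℝ, GIOU j v * starRingEnd ℂ (GIOU k v)
          = (starRingEnd ℂ) (∫ v : ℝ, GIOU k v * starRingEnd ℂ (GIOU j v)) := by
        rw [← integral_conj]
        refine integral_congr_ae (Filter.Eventually.of_forall fun v => ?_)
        simp only [map_mul, Complex.conj_conj]
        ring
      rw [hconj, h0, map_zero, mul_zero]
end

section
/- Let A be the lower-triangular matrix with A_{nm} = (-1)^{n+m}(n+m)!/(m!(n-m)!) for m ≤ n and 0 otherwise, and let C be the lower-triangular matrix with C_{nm} = (2m+1) n!/((n+m+1)!(n-m)!) for m ≤ n and 0 otherwise. Then AC = I and CA = I (in any finite dimension N+1). -/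
open Finset

/-- Alternating binomial sum `∑ j, (-1)^j C(d,j) C(a+j,b)`. -/
noncomputable def stmt10T (d a b : ℕ) : ℚ :=
  ∑ j ∈ range (d+1), (-1:ℚ)^j * (d.choose j) * ((a+j).choose b)

lemma stmt10T_succ (d a b : ℕ) : stmt10T (d+1) a b = stmt10T d a b - stmt10T d (a+1) b := by
  have hU : ∑ j ∈ range (d+1), (-1:ℚ)^j * (d.choose (j+1)) * ((a+1+j).choose b)
      = (a.choose b : ℚ) - stmt10T d a b := by
    rw [Finset.sum_range_succ]
    simp only [Nat.choose_succ_self, Nat.cast_zero, mul_zero, zero_mul, add_zero]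
    unfold stmt10T
    rw [Finset.sum_range_succ' _ d]
    simp only [pow_succ, pow_zero, Nat.choose_zero_right, Nat.cast_one, one_mul, mul_one,
      add_zero]
    have : ∀ j ∈ range d, (-1:ℚ)^j * (d.choose (j+1)) * ((a+1+j).choose b)
        = -((-1:ℚ)^j * (-1) * (d.choose (j+1)) * ((a+(j+1)).choose b)) := by
      intro j _
      have : a + (j+1) = a + 1 + j := by ring
      rw [this]; ring
    rw [Finset.sum_congr rfl this, Finset.sum_neg_distrib]
    ring
  unfold stmt10T
  rw [Finset.sum_range_succ' _ (d+1)]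
  simp only [Nat.choose_succ_succ, pow_succ, pow_zero, Nat.cast_add, Nat.choose_zero_right,
    Nat.cast_one, one_mul, add_zero]
  have h1 : ∑ j ∈ range (d+1), (-1:ℚ)^j * (-1) * ((↑(d.choose j) + ↑(d.choose (j+1)))) * ((a+(j+1)).choose b)
      = -(∑ j ∈ range (d+1), (-1:ℚ)^j * (d.choose j) * ((a+1+j).choose b))
        - ∑ j ∈ range (d+1), (-1:ℚ)^j * (d.choose (j+1)) * ((a+1+j).choose b) := by
    rw [← Finset.sum_neg_distrib, ← Finset.sum_sub_distrib]
    apply Finset.sum_congr rfl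
    intro j _
    have : a + (j+1) = a + 1 + j := by ring
    rw [this]; ring
  rw [h1, hU]
  unfold stmt10T
  ring

lemma stmt10T_shift (d a b : ℕ) : stmt10T d (a+1) (b+1) = stmt10T d a (b+1) + stmt10T d a b := by
  unfold stmt10T
  rw [← Finset.sum_add_distrib]
  apply Finset.sum_congr rfl
  intro j _
  have h : a + 1 + j = (a + j) + 1 := by ring
  rw [h, Nat.choose_succ_succ']
  push_cast
  ring

lemma stmt10T_eq_zero (d b : ℕ) (hb : b < d) (a : ℕ) : stmt10T d a b = 0 := by
  induction d generalizing a b with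
  | zero => omega
  | succ d ih =>
    cases b with
    | zero =>
      unfold stmt10T
      simp only [Nat.choose_zero_right, Nat.cast_one, mul_one]
      have h := Int.alternating_sum_range_choose (n := d+1)
      have h2 : ((∑ i ∈ range (d + 1 + 1), (-1:ℤ) ^ i * ((d+1).choose i) : ℤ) : ℚ)
          = ∑ j ∈ range (d + 1 + 1), (-1:ℚ) ^ j * ((d+1).choose j) := by push_cast; rfl
      rw [← h2, h]
      simp
    | succ b =>
      rw [stmt10T_succ, stmt10T_shift]
      have : b < d := by omega
      rw [ih b this a]
      ring

lemma stmt10_key (m n : ℕ) (h : m ≤ n) :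
    (∑ k ∈ Finset.Icc m n,
      ((-1:ℚ)^(n+k) * ((n+k).factorial : ℚ) / ((k.factorial:ℚ) * ((n-k).factorial:ℚ))) *
      (((2*m+1 : ℕ) : ℚ) * (k.factorial:ℚ) / (((k+m+1).factorial:ℚ) * ((k-m).factorial:ℚ))))
    = if n = m then 1 else 0 := by
  obtain ⟨d, rfl⟩ := Nat.exists_eq_add_of_le h
  have hmap : Finset.Icc m (m+d) = Finset.map ⟨fun j => m + j, (add_right_injective m : Function.Injective fun j => m + j)⟩ (Finset.range (d+1)) := by
    ext x
    simp only [Finset.mem_Icc, Finset.mem_map, Finset.mem_range, Function.Embedding.coeFn_mk]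
    constructor
    · intro hx; exact ⟨x - m, by omega, by omega⟩
    · rintro ⟨j, hj, rfl⟩; omega
  rw [hmap, Finset.sum_map]
  simp only [Function.Embedding.coeFn_mk]
  cases d with
  | zero =>
    simp only [Nat.add_zero, zero_add, Finset.sum_range_one, if_true, Nat.add_zero]
    have h2 : m - m = 0 := by omega
    rw [h2]
    rw [show m + m + 1 = (m+m) + 1 from rfl, Nat.factorial_succ]
    have hf : ((m+m).factorial : ℚ) ≠ 0 := Nat.cast_ne_zero.mpr (Nat.factorial_ne_zero _)
    have hm : ((m.factorial : ℚ)) ≠ 0 := Nat.cast_ne_zero.mpr (Nat.factorial_ne_zero _)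
    have hmm : ((m+m+1 : ℕ) : ℚ) ≠ 0 := by positivity
    have hpow : (-1:ℚ)^(m+m) = 1 := by
      rw [← two_mul]; exact Even.neg_one_pow ⟨m, by ring⟩
    rw [hpow]
    push_cast
    field_simp
    ring
  | succ e =>
    rw [if_neg (by omega)]
    set a := m + (e+1) + m with ha
    have hterm : ∀ j ∈ range (e+1+1),
        ((-1:ℚ)^(m+(e+1)+(m+j)) * (((m+(e+1))+(m+j)).factorial : ℚ) /
            (((m+j).factorial:ℚ) * (((m+(e+1))-(m+j)).factorial:ℚ))) *
          (((2*m+1 : ℕ) : ℚ) * ((m+j).factorial:ℚ) /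
            ((((m+j)+m+1).factorial:ℚ) * (((m+j)-m).factorial:ℚ)))
        = ((-1:ℚ)^(m+(e+1)+m) * (2*m+1) / (e+1)) *
            ((-1:ℚ)^j * ((e+1).choose j) * ((a+j).choose e)) := by
      intro j hj
      have hjd : j ≤ e + 1 := by simpa using Nat.lt_succ_iff.mp (Finset.mem_range.mp hj)
      have e1 : m + (e+1) - (m+j) = e+1-j := by omega
      have e2 : (m+j) - m = j := by omega
      have e3 : m + (e+1) + (m+j) = a + j := by omega
      have e4 : (m+j) + m + 1 = m + m + j + 1 := by omega
      rw [e1, e2, e3, e4]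
      rw [Nat.cast_choose ℚ hjd, Nat.cast_choose ℚ (show e ≤ a + j by omega)]
      have e5 : a + j - e = m + m + j + 1 := by omega
      rw [e5]
      have f1 : ((e+1-j).factorial : ℚ) ≠ 0 := Nat.cast_ne_zero.mpr (Nat.factorial_ne_zero _)
      have f2 : ((j.factorial : ℚ)) ≠ 0 := Nat.cast_ne_zero.mpr (Nat.factorial_ne_zero _)
      have f3 : (((m+m+j+1).factorial : ℚ)) ≠ 0 := Nat.cast_ne_zero.mpr (Nat.factorial_ne_zero _)
      have f4 : ((e.factorial : ℚ)) ≠ 0 := Nat.cast_ne_zero.mpr (Nat.factorial_ne_zero _)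
      have f5 : (((a+j).factorial : ℚ)) ≠ 0 := Nat.cast_ne_zero.mpr (Nat.factorial_ne_zero _)
      have f6 : ((e:ℚ)+1) ≠ 0 := by positivity
      rw [show (e+1).factorial = (e+1) * e.factorial from Nat.factorial_succ e]
      push_cast
      field_simp
      ring
    rw [Finset.sum_congr rfl hterm, ← Finset.mul_sum]
    have h0 := stmt10T_eq_zero (e+1) e (by omega) a
    unfold stmt10T at h0
    rw [h0, mul_zero]

/-- the matrices `A` and `C` are mutually inverse in any dimension `N+1`. -/
theorem stmt_10 (N : ℕ)
    (A C : Matrix (Fin (N + 1)) (Fin (N + 1)) ℚ)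
    (hA : ∀ n m : Fin (N + 1), A n m =
      if (m : ℕ) ≤ (n : ℕ) then
        (-1 : ℚ) ^ ((n : ℕ) + (m : ℕ)) * (((n : ℕ) + (m : ℕ)).factorial : ℚ) /
          (((m : ℕ).factorial : ℚ) * (((n : ℕ) - (m : ℕ)).factorial : ℚ))
      else 0)
    (hC : ∀ n m : Fin (N + 1), C n m =
      if (m : ℕ) ≤ (n : ℕ) then
        ((2 * (m : ℕ) + 1 : ℕ) : ℚ) * ((n : ℕ).factorial : ℚ) /
          ((((n : ℕ) + (m : ℕ) + 1).factorial : ℚ) * (((n : ℕ) - (m : ℕ)).factorial : ℚ))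
      else 0) :
    A * C = 1 ∧ C * A = 1 := by
  have hAC : A * C = 1 := by
    ext n m
    rw [Matrix.mul_apply, Matrix.one_apply]
    simp only [hA, hC]
    rw [Fin.sum_univ_eq_sum_range (fun k =>
      (if k ≤ (n:ℕ) then
        (-1 : ℚ) ^ ((n:ℕ) + k) * (((n:ℕ) + k).factorial : ℚ) /
          ((k.factorial : ℚ) * (((n:ℕ) - k).factorial : ℚ))
      else 0) *
      (if (m:ℕ) ≤ k then
        ((2 * (m:ℕ) + 1 : ℕ) : ℚ) * ((k.factorial : ℚ)) /
          (((k + (m:ℕ) + 1).factorial : ℚ) * ((k - (m:ℕ)).factorial : ℚ))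
      else 0))]
    by_cases hmn : (m:ℕ) ≤ (n:ℕ)
    · have hsub : Finset.Icc (m:ℕ) (n:ℕ) ⊆ Finset.range (N+1) := by
        intro k hk
        simp only [Finset.mem_Icc] at hk
        simp only [Finset.mem_range]
        exact lt_of_le_of_lt hk.2 n.isLt
      rw [← Finset.sum_subset hsub (by
        intro k _ hk
        simp only [Finset.mem_Icc, not_and_or, not_le] at hk
        rcases hk with hk | hk
        · rw [if_neg (show ¬ ((m:ℕ) ≤ k) by omega), mul_zero]
        · rw [if_neg (show ¬ (k ≤ (n:ℕ)) by omega), zero_mul])]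
      have hcong : ∀ k ∈ Finset.Icc (m:ℕ) (n:ℕ),
          (if k ≤ (n:ℕ) then
            (-1 : ℚ) ^ ((n:ℕ) + k) * (((n:ℕ) + k).factorial : ℚ) /
              ((k.factorial : ℚ) * (((n:ℕ) - k).factorial : ℚ))
          else 0) *
          (if (m:ℕ) ≤ k then
            ((2 * (m:ℕ) + 1 : ℕ) : ℚ) * ((k.factorial : ℚ)) /
              (((k + (m:ℕ) + 1).factorial : ℚ) * ((k - (m:ℕ)).factorial : ℚ))
          else 0)
          = ((-1:ℚ)^((n:ℕ)+k) * (((n:ℕ)+k).factorial : ℚ) /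
              ((k.factorial:ℚ) * (((n:ℕ)-k).factorial:ℚ))) *
            (((2*(m:ℕ)+1 : ℕ) : ℚ) * (k.factorial:ℚ) /
              (((k+(m:ℕ)+1).factorial:ℚ) * ((k-(m:ℕ)).factorial:ℚ))) := by
        intro k hk
        simp only [Finset.mem_Icc] at hk
        rw [if_pos hk.2, if_pos hk.1]
      rw [Finset.sum_congr rfl hcong, stmt10_key (m:ℕ) (n:ℕ) hmn]
      simp [Fin.ext_iff]
    · rw [if_neg (by simp [Fin.ext_iff]; omega)]
      apply Finset.sum_eq_zero
      intro k _
      by_cases h1 : k ≤ (n:ℕ)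
      · rw [if_neg (show ¬ ((m:ℕ) ≤ k) by omega), mul_zero]
      · rw [if_neg (show ¬ (k ≤ (n:ℕ)) from h1), zero_mul]
  exact ⟨hAC, mul_eq_one_comm.mp hAC⟩
end

section
/- Let B be the lower-triangular matrix with B_{nm} = (n+m)!/(m!(n-m)!) for m ≤ n and 0 otherwise, and Γ_{nm} = 1/(n-m)! for m ≤ n. Then B Γ* = B*, where (M*)_{jk} = (-1)^{j+k} M_{jk}; equivalently, for all 0 ≤ m ≤ n: ∑_{k=m}^n (-1)^{k+m} (n+k)!/((k-m)! k! (n-k)!) = (-1)^{n+m} (n+m)!/(m!(n-m)!). -/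
/-!
Substituting `k = m + i` turns the summand into `n! / (n - m)!` times
`(-1)^i * C(n - m, i) * C(n + m + i, n)`, and `∑ᵢ (-1)^(d - i) C(d, i) f(a + i)` is the `d`-th
forward difference of `f` at `a`. For `f = C(·, b)` with `d ≤ b` this is `C(a, b - d)`, because
differencing lowers the lower index of a binomial coefficient by one (Pascal's rule). The matrix
identity is the same statement entrywise, the product being supported on `m ≤ k ≤ n`.
-/

open Finset Nat

theorem sum_range_neg_one_pow_mul_choose_mul_choose_add {d b : ℕ} (hdb : d ≤ b) (a : ℕ) :
    ∑ k ∈ range (d + 1), (-1 : ℤ) ^ (d - k) * d.choose k * (a + k).choose b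
      = a.choose (b - d) := by
  obtain ⟨j, rfl⟩ := Nat.exists_eq_add_of_le hdb
  have h := congr_fun (fwdDiff_iter_choose j d) a
  rw [fwdDiff_iter_eq_sum_shift] at h
  simpa using h

theorem sum_Icc_neg_one_pow_mul_choose_mul_choose {m n : ℕ} (hmn : m ≤ n) :
    ∑ k ∈ Icc m n, (-1 : ℤ) ^ (n - k) * (n - m).choose (k - m) * (n + k).choose n
      = (n + m).choose m := by
  rw [← Ico_add_one_right_eq_Icc, sum_Ico_eq_sum_range, show n + 1 - m = n - m + 1 by omega]
  convert sum_range_neg_one_pow_mul_choose_mul_choose_add (Nat.sub_le n m) (n + m) using 2 with i hi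
  · rw [mem_range] at hi
    rw [show n - (m + i) = n - m - i by omega, Nat.add_sub_cancel_left, ← add_assoc]
  · rw [Nat.sub_sub_self hmn]

theorem factorial_div_eq_mul_choose_mul_choose {m k n : ℕ} (hmk : m ≤ k) (hkn : k ≤ n) :
    ((n + k)! : ℚ) / ((k - m)! * k ! * (n - k)!)
      = n ! / (n - m)! * (n - m).choose (k - m) * (n + k).choose n := by
  rw [Nat.cast_choose ℚ (Nat.sub_le_sub_right hkn m), Nat.cast_choose ℚ (Nat.le_add_right n k),
    show n - m - (k - m) = n - k by omega, Nat.add_sub_cancel_left]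
  field_simp

theorem sum_Icc_neg_one_pow_mul_factorial_div {m n : ℕ} (hmn : m ≤ n) :
    ∑ k ∈ Icc m n, (-1 : ℚ) ^ (k + m) * (n + k)! / ((k - m)! * k ! * (n - k)!)
      = (-1 : ℚ) ^ (n + m) * (n + m)! / (m ! * (n - m)!) := by
  have hsign : ∀ k ≤ n, (-1 : ℚ) ^ (k + m) = (-1) ^ (n + m) * (-1) ^ (n - k) := fun k hk => by
    rw [← pow_add, show n + m + (n - k) = k + m + 2 * (n - k) by omega, pow_add _ (k + m), pow_mul]
    norm_num
  have hchoose := congrArg (Int.cast : ℤ → ℚ) (sum_Icc_neg_one_pow_mul_choose_mul_choose hmn)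
  push_cast at hchoose
  calc ∑ k ∈ Icc m n, (-1 : ℚ) ^ (k + m) * (n + k)! / ((k - m)! * k ! * (n - k)!)
      = (-1) ^ (n + m) * (n ! / (n - m)!) *
          ∑ k ∈ Icc m n, (-1 : ℚ) ^ (n - k) * (n - m).choose (k - m) * (n + k).choose n := by
        rw [mul_sum]
        refine sum_congr rfl fun k hk => ?_
        rw [mem_Icc] at hk
        rw [mul_div_assoc, factorial_div_eq_mul_choose_mul_choose hk.1 hk.2, hsign k hk.2]
        ring
    _ = (-1 : ℚ) ^ (n + m) * (n + m)! / (m ! * (n - m)!) := by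
        rw [hchoose, Nat.cast_choose ℚ (Nat.le_add_left m n), Nat.add_sub_cancel]
        field_simp

theorem Fin.sum_univ_ite_Icc {M : Type*} [AddCommMonoid M] {N n : ℕ} (hn : n ≤ N) (m : ℕ)
    (f : ℕ → M) :
    ∑ k : Fin (N + 1), (if m ≤ (k : ℕ) ∧ (k : ℕ) ≤ n then f k else 0) = ∑ k ∈ Icc m n, f k := by
  rw [Fin.sum_univ_eq_sum_range (fun k => if m ≤ k ∧ k ≤ n then f k else 0), ← sum_filter]
  congr 1
  ext k
  simp only [mem_filter, mem_range, mem_Icc]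
  omega

/-- `B Γ* = B*`, equivalently for all `0 ≤ m ≤ n`,
`∑_{k=m}^n (-1)^{k+m} (n+k)!/((k-m)! k! (n-k)!) = (-1)^{n+m} (n+m)!/(m!(n-m)!)`. -/
theorem stmt_12 (N : ℕ)
    (B Γ Γstar Bstar : Matrix (Fin (N + 1)) (Fin (N + 1)) ℚ)
    (hB : ∀ n m : Fin (N + 1), B n m =
      if (m : ℕ) ≤ (n : ℕ) then
        (((n : ℕ) + (m : ℕ)).factorial : ℚ) /
          (((m : ℕ).factorial : ℚ) * (((n : ℕ) - (m : ℕ)).factorial : ℚ))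
      else 0)
    (hΓ : ∀ n m : Fin (N + 1), Γ n m =
      if (m : ℕ) ≤ (n : ℕ) then 1 / ((((n : ℕ) - (m : ℕ)).factorial : ℚ)) else 0)
    (hΓstar : ∀ n m : Fin (N + 1), Γstar n m = (-1 : ℚ) ^ ((n : ℕ) + (m : ℕ)) * Γ n m)
    (hBstar : ∀ n m : Fin (N + 1), Bstar n m = (-1 : ℚ) ^ ((n : ℕ) + (m : ℕ)) * B n m) :
    B * Γstar = Bstar ∧
    ∀ n m : ℕ, m ≤ n →
      (∑ k ∈ Finset.Icc m n,
        (-1 : ℚ) ^ (k + m) * ((n + k).factorial : ℚ) /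
          (((k - m).factorial : ℚ) * (k.factorial : ℚ) * ((n - k).factorial : ℚ)))
        = (-1 : ℚ) ^ (n + m) * ((n + m).factorial : ℚ) /
            ((m.factorial : ℚ) * ((n - m).factorial : ℚ)) := by
  refine ⟨?_, fun n m => sum_Icc_neg_one_pow_mul_factorial_div⟩
  ext n m
  let summand : ℕ → ℚ := fun k =>
    (-1 : ℚ) ^ (k + m) * ((n + k : ℕ)! : ℚ) / (((k - m : ℕ)! : ℚ) * k ! * (n - k : ℕ)!)
  have hterm : ∀ k, B n k * Γstar k m =
      if (m : ℕ) ≤ k ∧ (k : ℕ) ≤ n then summand k else 0 := fun k => by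
    rw [hB, hΓstar, hΓ]
    by_cases hkn : (k : ℕ) ≤ n
    · by_cases hmk : (m : ℕ) ≤ k
      · simp only [summand, hkn, hmk, and_self, if_true]
        ring
      · simp [hmk]
    · simp [hkn]
  rw [Matrix.mul_apply, sum_congr rfl fun k _ => hterm k,
    Fin.sum_univ_ite_Icc (Nat.lt_succ_iff.mp n.isLt) m summand, hBstar, hB]
  split_ifs with hmn
  · rw [← mul_div_assoc]
    exact sum_Icc_neg_one_pow_mul_factorial_div hmn
  · rw [Icc_eq_empty (by omega), sum_empty, mul_zero]
end

section
/- For all integers 0 ≤ m ≤ n: ∑_{k=m}^n (-1)^{n+k} (n+k)!/(k!(n-k)!(k-m)!) = (n+m)!/(m!(n-m)!)·(-1)^{n+m}·(-1)^{n+m}, i.e., the matrix identity B = A Γ holds where A_{nk} = (-1)^{n+k}(n+k)!/(k!(n-k)!), Γ_{km} = 1/(k-m)!, B_{nm} = (n+m)!/(m!(n-m)!). -/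
lemma key13 (n : ℕ) : ∀ d r : ℕ, d ≤ n → d ≤ r →
    ∑ j ∈ Finset.range (d+1), (-1:ℤ)^j * (d.choose j) * ((r-j).choose n)
      = ((r-d).choose (n-d)) := by
  intro d
  induction d with
  | zero => simp
  | succ d ih =>
    intro r hdn hdr
    have ihr : ∑ j ∈ Finset.range (d+1), (-1:ℤ)^j * (d.choose j) * ((r-j).choose n)
        = ((r-d).choose (n-d)) := ih r (by omega) (by omega)
    have ihr1 : ∑ j ∈ Finset.range (d+1), (-1:ℤ)^j * (d.choose j) * ((r-1-j).choose n)
        = ((r-1-d).choose (n-d)) := by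
      have := ih (r-1) (by omega) (by omega)
      exact this
    rw [Finset.sum_range_succ']
    have hsplit : ∀ j ∈ Finset.range (d+1),
        (-1:ℤ)^(j+1) * ((d+1).choose (j+1)) * ((r-(j+1)).choose n)
        = (-1:ℤ)^(j+1) * (d.choose j) * ((r-1-j).choose n)
          + (-1:ℤ)^(j+1) * (d.choose (j+1)) * ((r-(j+1)).choose n) := by
      intro j hj
      have : ((d+1).choose (j+1) : ℤ) = d.choose j + d.choose (j+1) := by
        rw [Nat.choose_succ_succ]; push_cast; ring
      rw [this]
      have : r - (j+1) = r - 1 - j := by omega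
      rw [this]; ring
    rw [Finset.sum_congr rfl hsplit, Finset.sum_add_distrib]
    have e1 : ∑ j ∈ Finset.range (d+1), (-1:ℤ)^(j+1) * (d.choose j) * ((r-1-j).choose n)
        = -((r-1-d).choose (n-d)) := by
      rw [← ihr1, ← Finset.sum_neg_distrib]
      apply Finset.sum_congr rfl
      intro j hj; ring
    have e2 : ∑ j ∈ Finset.range (d+1), (-1:ℤ)^(j+1) * (d.choose (j+1)) * ((r-(j+1)).choose n)
        = ((r-d).choose (n-d)) - ((r-0).choose n) := by
      have := Finset.sum_range_succ' (fun j => (-1:ℤ)^j * (d.choose j) * ((r-j).choose n)) (d+1)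
      -- ∑_{j∈range(d+2)} f j = ∑_{j∈range(d+1)} f (j+1) + f 0
      have hz : ∑ j ∈ Finset.range (d+2), (-1:ℤ)^j * (d.choose j) * ((r-j).choose n)
          = ((r-d).choose (n-d)) := by
        rw [Finset.sum_range_succ, ihr]
        simp [Nat.choose_succ_self]
      rw [hz] at this
      simp only [pow_zero, Nat.choose_zero_right, Nat.cast_one, one_mul, Nat.sub_zero] at this ⊢
      linarith
    rw [e1, e2]
    have h1 : r - d = (r - (d+1)) + 1 := by omega
    have h2 : n - d = (n - (d+1)) + 1 := by omega
    have h3 : r - 1 - d = r - (d+1) := by omega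
    rw [h1, h2, h3, Nat.choose_succ_succ]
    simp only [Nat.succ_eq_one_add, Nat.choose_zero_right, Nat.cast_one]
    push_cast
    ring

lemma sum13 (n m : ℕ) (h : m ≤ n) :
    (∑ k ∈ Finset.Icc m n,
        (-1 : ℚ) ^ (n + k) * ((n + k).factorial : ℚ) /
          ((k.factorial : ℚ) * ((n - k).factorial : ℚ) * ((k - m).factorial : ℚ)))
        = ((n + m).factorial : ℚ) / ((m.factorial : ℚ) * ((n - m).factorial : ℚ)) := by
  set d := n - m with hd
  have hnd : n = m + d := by omega
  rw [← Finset.Ico_add_one_right_eq_Icc, Finset.sum_Ico_eq_sum_range]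
  have hcard : n + 1 - m = d + 1 := by omega
  rw [hcard]
  rw [← Finset.sum_range_reflect]
  have hterm : ∀ j ∈ Finset.range (d+1),
      (-1 : ℚ) ^ (n + (m + (d + 1 - 1 - j))) * ((n + (m + (d + 1 - 1 - j))).factorial : ℚ) /
          (((m + (d + 1 - 1 - j)).factorial : ℚ) * ((n - (m + (d + 1 - 1 - j))).factorial : ℚ)
            * (((m + (d + 1 - 1 - j)) - m).factorial : ℚ))
      = ((n.factorial : ℚ) / (d.factorial : ℚ)) *
        ((-1:ℚ)^j * ((d.choose j) : ℚ) * (((2*n-j).choose n) : ℚ)) := by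
    intro j hj
    simp only [Finset.mem_range] at hj
    have hjd : j ≤ d := by omega
    set a := d - j with ha
    have h1 : d + 1 - 1 - j = a := by omega
    rw [h1]
    have h2 : n + (m + a) = (n + m + a) := by omega
    have h3 : n - (m + a) = j := by omega
    have h4 : m + a - m = a := by omega
    rw [h2, h3, h4]
    have h5 : 2*n - j = n + m + a := by omega
    rw [h5]
    -- sign
    have hsgn : (-1:ℚ) ^ (n + m + a) = (-1:ℚ)^j := by
      have : n + m + a = j + 2*(m+a) := by omega
      rw [this, pow_add, pow_mul, neg_one_sq, one_pow, mul_one]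
    rw [hsgn]
    -- factorial identities
    have hf1 : ((n + m + a).factorial : ℚ)
        = ((n + m + a).choose n : ℚ) * (n.factorial : ℚ) * ((m + a).factorial : ℚ) := by
      have := Nat.choose_mul_factorial_mul_factorial (show n ≤ n + m + a by omega)
      have h6 : n + m + a - n = m + a := by omega
      rw [h6] at this
      exact_mod_cast congrArg (Nat.cast : ℕ → ℚ) this.symm
    have hf2 : (d.factorial : ℚ)
        = (d.choose j : ℚ) * (j.factorial : ℚ) * (a.factorial : ℚ) := by
      have := Nat.choose_mul_factorial_mul_factorial hjd
      have h7 : d - j = a := by omega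
      rw [h7] at this
      exact_mod_cast congrArg (Nat.cast : ℕ → ℚ) this.symm
    rw [hf1, hf2]
    have p1 : ((m+a).factorial : ℚ) ≠ 0 := Nat.cast_ne_zero.2 (Nat.factorial_ne_zero _)
    have p2 : (j.factorial : ℚ) ≠ 0 := Nat.cast_ne_zero.2 (Nat.factorial_ne_zero _)
    have p3 : (a.factorial : ℚ) ≠ 0 := Nat.cast_ne_zero.2 (Nat.factorial_ne_zero _)
    have p0 : ((d.choose j : ℕ) : ℚ) ≠ 0 := Nat.cast_ne_zero.2 (Nat.choose_pos hjd).ne'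
    field_simp
  rw [Finset.sum_congr rfl hterm, ← Finset.mul_sum]
  have hkey : (∑ j ∈ Finset.range (d+1), (-1:ℚ)^j * ((d.choose j) : ℚ) * (((2*n-j).choose n) : ℚ))
      = (((n+m).choose m) : ℚ) := by
    have := key13 n d (2*n) (by omega) (by omega)
    have h8 : 2*n - d = n + m := by omega
    have h9 : n - d = m := by omega
    rw [h8, h9] at this
    exact_mod_cast congrArg (Int.cast : ℤ → ℚ) this
  rw [hkey]
  have hf3 : ((n+m).factorial : ℚ) = ((n+m).choose m : ℚ) * (m.factorial : ℚ) * (n.factorial : ℚ) := by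
    have := Nat.choose_mul_factorial_mul_factorial (show m ≤ n + m by omega)
    have : (n+m).choose m * m.factorial * (n).factorial = (n+m).factorial := by
      have h10 : n + m - m = n := by omega
      rw [← h10] at *; simpa [h10] using this
    exact_mod_cast congrArg (Nat.cast : ℕ → ℚ) this.symm
  rw [hf3]
  have p4 : (d.factorial : ℚ) ≠ 0 := Nat.cast_ne_zero.2 (Nat.factorial_ne_zero _)
  have p5 : (m.factorial : ℚ) ≠ 0 := Nat.cast_ne_zero.2 (Nat.factorial_ne_zero _)
  field_simp

/-- `B = A Γ`, i.e. `∑_{k=m}^n A_{nk}/(k-m)! = (n+m)!/(m!(n-m)!)`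
for all `0 ≤ m ≤ n`, where `A_{nk} = (-1)^{n+k}(n+k)!/(k!(n-k)!)`. -/
theorem stmt_13 (N : ℕ)
    (A Γ B : Matrix (Fin (N + 1)) (Fin (N + 1)) ℚ)
    (hA : ∀ n k : Fin (N + 1), A n k =
      if (k : ℕ) ≤ (n : ℕ) then
        (-1 : ℚ) ^ ((n : ℕ) + (k : ℕ)) * (((n : ℕ) + (k : ℕ)).factorial : ℚ) /
          (((k : ℕ).factorial : ℚ) * (((n : ℕ) - (k : ℕ)).factorial : ℚ))
      else 0)
    (hΓ : ∀ k m : Fin (N + 1), Γ k m =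
      if (m : ℕ) ≤ (k : ℕ) then 1 / ((((k : ℕ) - (m : ℕ)).factorial : ℚ)) else 0)
    (hB : ∀ n m : Fin (N + 1), B n m =
      if (m : ℕ) ≤ (n : ℕ) then
        (((n : ℕ) + (m : ℕ)).factorial : ℚ) /
          (((m : ℕ).factorial : ℚ) * (((n : ℕ) - (m : ℕ)).factorial : ℚ))
      else 0) :
    B = A * Γ ∧
    ∀ n m : ℕ, m ≤ n →
      (∑ k ∈ Finset.Icc m n,
        (-1 : ℚ) ^ (n + k) * ((n + k).factorial : ℚ) /
          ((k.factorial : ℚ) * ((n - k).factorial : ℚ) * ((k - m).factorial : ℚ)))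
        = ((n + m).factorial : ℚ) / ((m.factorial : ℚ) * ((n - m).factorial : ℚ)) := by
  have key : ∀ n m : ℕ, m ≤ n →
      (∑ k ∈ Finset.Icc m n,
        (-1 : ℚ) ^ (n + k) * ((n + k).factorial : ℚ) /
          ((k.factorial : ℚ) * ((n - k).factorial : ℚ) * ((k - m).factorial : ℚ)))
        = ((n + m).factorial : ℚ) / ((m.factorial : ℚ) * ((n - m).factorial : ℚ)) :=
    fun n m h => sum13 n m h
  refine ⟨?_, key⟩
  ext n m
  rw [hB, Matrix.mul_apply]
  set G : ℕ → ℚ := fun k =>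
    if (m : ℕ) ≤ k ∧ k ≤ (n : ℕ) then
      (-1 : ℚ) ^ ((n : ℕ) + k) * (((n : ℕ) + k).factorial : ℚ) /
        ((k.factorial : ℚ) * (((n : ℕ) - k).factorial : ℚ) * (((k - (m : ℕ)).factorial : ℚ)))
    else 0 with hG
  have hterm : ∀ k : Fin (N+1), A n k * Γ k m = G (k : ℕ) := by
    intro k
    simp only [hA, hΓ, hG]
    by_cases h1 : (k : ℕ) ≤ (n : ℕ)
    · by_cases h2 : (m : ℕ) ≤ (k : ℕ)
      · rw [if_pos h1, if_pos h2, if_pos (And.intro h2 h1),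
          div_mul_div_comm, mul_one, mul_assoc]
      · rw [if_pos h1, if_neg h2, if_neg (fun h => h2 h.1), mul_zero]
    · by_cases h2 : (m : ℕ) ≤ (k : ℕ)
      · rw [if_neg h1, if_pos h2, if_neg (fun h => h1 h.2), zero_mul]
      · rw [if_neg h1, if_neg h2, if_neg (fun h => h2 h.1), zero_mul]
  calc (if (m : ℕ) ≤ (n : ℕ) then
        (((n : ℕ) + (m : ℕ)).factorial : ℚ) /
          (((m : ℕ).factorial : ℚ) * (((n : ℕ) - (m : ℕ)).factorial : ℚ))
      else 0)
      = ∑ k ∈ Finset.range (N+1), G k := by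
        by_cases hmn : (m : ℕ) ≤ (n : ℕ)
        · rw [if_pos hmn]
          have hfil : ∑ k ∈ Finset.range (N+1), G k
              = ∑ k ∈ Finset.Icc (m : ℕ) (n : ℕ),
                (-1 : ℚ) ^ ((n : ℕ) + k) * (((n : ℕ) + k).factorial : ℚ) /
                  ((k.factorial : ℚ) * (((n : ℕ) - k).factorial : ℚ)
                    * (((k - (m : ℕ)).factorial : ℚ))) := by
            simp only [hG]
            rw [Finset.sum_ite, Finset.sum_const_zero, add_zero]
            apply Finset.sum_congr _ (fun _ _ => rfl)
            ext k
            simp only [Finset.mem_filter, Finset.mem_range, Finset.mem_Icc]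
            constructor
            · rintro ⟨_, h2, h3⟩; exact ⟨h2, h3⟩
            · rintro ⟨h2, h3⟩; exact ⟨by omega, h2, h3⟩
          rw [hfil, key (n : ℕ) (m : ℕ) hmn]
        · rw [if_neg hmn]
          symm
          apply Finset.sum_eq_zero
          intro k _
          simp only [hG]
          apply if_neg
          rintro ⟨h2, h3⟩; omega
    _ = ∑ k : Fin (N+1), G (k : ℕ) := (Fin.sum_univ_eq_sum_range G (N+1)).symm
    _ = ∑ k : Fin (N+1), A n k * Γ k m := by
        exact Finset.sum_congr rfl (fun k _ => (hterm k).symm)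
end

section
/- For integers 0 ≤ k ≤ n: ∑_{m=k}^n (-1)^{m-k} m! / ((m-k)!(n-m)!(m+k+1)!) = n! / ((n-k)!(n+k+1)!). -/
open Finset fwdDiff

private lemma fac_ne (a : ℕ) : (a.factorial : ℚ) ≠ 0 := by
  exact_mod_cast a.factorial_ne_zero

/-- One-step forward difference of `j ↦ (k+j)!/(k+1+s+j)!`. -/
private lemma step (k s : ℕ) :
    Δ_[1] (fun j : ℕ => ((k + j).factorial : ℚ) / ((k + 1 + s + j).factorial : ℚ))
      = (-(s + 1) : ℚ) • fun j : ℕ =>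
          ((k + j).factorial : ℚ) / ((k + 1 + (s + 1) + j).factorial : ℚ) := by
  funext j
  simp only [fwdDiff, Pi.smul_apply, smul_eq_mul]
  have h1 : ((k + (j + 1)).factorial : ℚ) = (k + j + 1) * (k + j).factorial := by
    rw [show k + (j + 1) = (k + j) + 1 by ring, Nat.factorial_succ]; push_cast; ring
  have h2 : ((k + 1 + s + (j + 1)).factorial : ℚ)
      = (k + 1 + s + j + 1) * (k + 1 + s + j).factorial := by
    rw [show k + 1 + s + (j + 1) = (k + 1 + s + j) + 1 by ring, Nat.factorial_succ]
    push_cast; ring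
  have h3 : ((k + 1 + (s + 1) + j).factorial : ℚ)
      = (k + 1 + s + j + 1) * (k + 1 + s + j).factorial := by
    rw [show k + 1 + (s + 1) + j = (k + 1 + s + j) + 1 by ring, Nat.factorial_succ]
    push_cast; ring
  rw [h1, h2, h3]
  have hne : ((k + 1 + s + j).factorial : ℚ) ≠ 0 := fac_ne _
  have hne2 : ((k + 1 + s + j : ℕ) : ℚ) + 1 ≠ 0 := by positivity
  field_simp
  ring

/-- Iterated forward differences of `j ↦ (k+j)!/(k+1+s+j)!` at `0`. -/
private lemma iter_formula (k : ℕ) : ∀ N s : ℕ,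
    (fwdDiff (1:ℕ))^[N] (fun j : ℕ => ((k + j).factorial : ℚ) / ((k + 1 + s + j).factorial : ℚ)) 0
      = (-1) ^ N * ((s + N).factorial : ℚ) * (k.factorial : ℚ)
          / ((s.factorial : ℚ) * ((k + 1 + s + N).factorial : ℚ)) := by
  intro N
  induction N with
  | zero =>
      intro s
      simp only [Function.iterate_zero, id_eq, pow_zero, one_mul, Nat.add_zero]
      have h1 := fac_ne s
      have h2 := fac_ne (k + 1 + s)
      field_simp
  | succ N ih =>
      intro s
      rw [Function.iterate_succ_apply, step k s, fwdDiff_iter_const_smul,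
        Pi.smul_apply, smul_eq_mul, ih (s + 1)]
      have h1 : ((s + 1 + N).factorial : ℚ) = (s + (N + 1)).factorial := by
        norm_num [show s + 1 + N = s + (N + 1) by ring]
      have h2 : ((k + 1 + (s + 1) + N).factorial : ℚ) = (k + 1 + s + (N + 1)).factorial := by
        norm_num [show k + 1 + (s + 1) + N = k + 1 + s + (N + 1) by ring]
      have h3 : ((s + 1).factorial : ℚ) = (s + 1) * s.factorial := by
        rw [Nat.factorial_succ]; push_cast; ring
      rw [h1, h2, h3]
      have hs : ((s : ℚ) + 1) ≠ 0 := by positivity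
      have := fac_ne s
      have := fac_ne (k + 1 + s + (N + 1))
      field_simp
      ring

/-- The alternating binomial sum. -/
private lemma alt_sum (k N s : ℕ) :
    ∑ j ∈ range (N + 1), (-1 : ℚ) ^ j * (N.choose j) *
        (((k + j).factorial : ℚ) / ((k + 1 + s + j).factorial : ℚ))
      = ((s + N).factorial : ℚ) * (k.factorial : ℚ)
          / ((s.factorial : ℚ) * ((k + 1 + s + N).factorial : ℚ)) := by
  have h := fwdDiff_iter_eq_sum_shift (1 : ℕ)
    (fun j : ℕ => ((k + j).factorial : ℚ) / ((k + 1 + s + j).factorial : ℚ)) N 0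
  rw [iter_formula k N s] at h
  have key : ∑ j ∈ range (N + 1), (-1 : ℚ) ^ j * (N.choose j) *
        (((k + j).factorial : ℚ) / ((k + 1 + s + j).factorial : ℚ))
      = (-1 : ℚ) ^ N * ∑ j ∈ range (N + 1),
          ((-1 : ℤ) ^ (N - j) * (N.choose j) : ℤ) •
            (((k + (0 + j • 1)).factorial : ℚ) / ((k + 1 + s + (0 + j • 1)).factorial : ℚ)) := by
    rw [Finset.mul_sum]
    refine Finset.sum_congr rfl fun j hj => ?_
    have hjN : j ≤ N := Nat.lt_succ_iff.mp (Finset.mem_range.mp hj)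
    have hsign : (-1 : ℚ) ^ N * (-1 : ℚ) ^ (N - j) = (-1 : ℚ) ^ j := by
      have h1 : (-1 : ℚ) ^ (N - j) * (-1 : ℚ) ^ j = (-1 : ℚ) ^ N := by
        rw [← pow_add, Nat.sub_add_cancel hjN]
      have h2 : (-1 : ℚ) ^ (N - j) * (-1 : ℚ) ^ (N - j) = 1 := by
        rw [← pow_add]; exact Even.neg_one_pow ⟨N - j, rfl⟩
      calc (-1 : ℚ) ^ N * (-1 : ℚ) ^ (N - j)
          = ((-1 : ℚ) ^ (N - j) * (-1 : ℚ) ^ (N - j)) * (-1 : ℚ) ^ j := by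
            rw [← h1]; ring
        _ = (-1 : ℚ) ^ j := by rw [h2, one_mul]
    simp only [smul_eq_mul, zsmul_eq_mul, Int.cast_mul, Int.cast_pow, Int.cast_neg,
      Int.cast_one, Int.cast_natCast, smul_eq_mul, mul_one, zero_add]
    rw [show (-1 : ℚ) ^ N * ((-1 : ℚ) ^ (N - j) * (N.choose j : ℚ) *
        (((k + j).factorial : ℚ) / ((k + 1 + s + j).factorial : ℚ)))
      = ((-1 : ℚ) ^ N * (-1 : ℚ) ^ (N - j)) * ((N.choose j : ℚ) *
        (((k + j).factorial : ℚ) / ((k + 1 + s + j).factorial : ℚ))) by ring, hsign]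
    ring
  rw [key, ← h]
  rw [show (-1 : ℚ) ^ N * ((-1 : ℚ) ^ N * ((s + N).factorial : ℚ) * (k.factorial : ℚ)
      / ((s.factorial : ℚ) * ((k + 1 + s + N).factorial : ℚ)))
    = ((-1 : ℚ) ^ (N + N)) * (((s + N).factorial : ℚ) * (k.factorial : ℚ)
      / ((s.factorial : ℚ) * ((k + 1 + s + N).factorial : ℚ))) by rw [pow_add]; ring,
    Even.neg_one_pow ⟨N, rfl⟩, one_mul]

/-- for `0 ≤ k ≤ n`,
`∑_{m=k}^n (-1)^{m-k} m!/((m-k)!(n-m)!(m+k+1)!) = n!/((n-k)!(n+k+1)!)`. -/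
theorem stmt_14 (n k : ℕ) (hk : k ≤ n) :
    (∑ m ∈ Finset.Icc k n,
      (-1 : ℚ) ^ (m - k) * (m.factorial : ℚ) /
        (((m - k).factorial : ℚ) * ((n - m).factorial : ℚ) * ((m + k + 1).factorial : ℚ)))
      = (n.factorial : ℚ) / (((n - k).factorial : ℚ) * ((n + k + 1).factorial : ℚ)) := by
  set N := n - k with hN
  have hnk : n = k + N := by omega
  have hIcc : Finset.Icc k n = Finset.map ⟨fun j => k + j, add_right_injective k⟩
      (Finset.range (N + 1)) := by
    ext m
    simp only [Finset.mem_Icc, Finset.mem_map, Finset.mem_range, Function.Embedding.coeFn_mk]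
    constructor
    · rintro ⟨h1, h2⟩; exact ⟨m - k, by omega, (by omega : k + (m - k) = m)⟩
    · rintro ⟨j, hj, rfl⟩; exact (by omega : k ≤ k + j ∧ k + j ≤ n)
  rw [hIcc, Finset.sum_map]
  simp only [Function.Embedding.coeFn_mk]
  have main := alt_sum k N k
  have lhs_eq : ∀ j ∈ Finset.range (N + 1),
      (-1 : ℚ) ^ (k + j - k) * ((k + j).factorial : ℚ) /
        (((k + j - k).factorial : ℚ) * ((n - (k + j)).factorial : ℚ) *
          ((k + j + k + 1).factorial : ℚ))
      = ((-1 : ℚ) ^ j * (N.choose j) *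
          (((k + j).factorial : ℚ) / ((k + 1 + k + j).factorial : ℚ))) / (N.factorial : ℚ) := by
    intro j hj
    have hjN : j ≤ N := Nat.lt_succ_iff.mp (Finset.mem_range.mp hj)
    have e1 : k + j - k = j := by omega
    have e2 : n - (k + j) = N - j := by omega
    have e3 : k + j + k + 1 = k + 1 + k + j := by omega
    rw [e1, e2, e3]
    have hch : (N.choose j : ℚ) * (j.factorial : ℚ) * ((N - j).factorial : ℚ)
        = (N.factorial : ℚ) := by
      exact_mod_cast congrArg (Nat.cast : ℕ → ℚ) (Nat.choose_mul_factorial_mul_factorial hjN)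
    have h1 := fac_ne j
    have h2 := fac_ne (N - j)
    have h3 := fac_ne (k + 1 + k + j)
    have h4 := fac_ne N
    field_simp
    rw [← hch]; ring
  rw [Finset.sum_congr rfl lhs_eq, ← Finset.sum_div, main]
  have e4 : k + 1 + k + N = n + k + 1 := by omega
  have e5 : k + N = n := by omega
  rw [e4, e5]
  have h5 := fac_ne k
  have h6 := fac_ne N
  have h7 := fac_ne (n + k + 1)
  field_simp
end

section
/- For integers 0 ≤ m ≤ n, the n-th derivative of z ↦ z^{n+m}(1+z)^{n-m} evaluated at z = -1 equals binom(n,m)·(n+m)!·(n-m)!/n! · (-1)^n, i.e. (d^n/dz^n)[z^{n+m}(1+z)^{n-m}]|_{z=-1} = (-1)^n (n choose m) (n+m)!(n-m)!/n!. -/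
open Polynomial

private lemma iteratedDeriv_polynomial (p : ℝ[X]) (k : ℕ) :
    iteratedDeriv k (fun x : ℝ => p.eval x) = fun x => ((derivative^[k]) p).eval x := by
  induction k with
  | zero => simp
  | succ k ih =>
    rw [iteratedDeriv_succ, ih]
    funext x
    rw [Function.iterate_succ_apply']
    exact Polynomial.deriv _

/-- for `0 ≤ m ≤ n`,
`(d^n/dz^n)[z^{n+m}(1+z)^{n-m}]` at `z = -1` equals
`(-1)^n · C(n,m) · (n+m)! (n-m)! / n!`. -/
theorem stmt_16 (n m : ℕ) (hm : m ≤ n) :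
    iteratedDeriv n (fun z : ℝ => z ^ (n + m) * (1 + z) ^ (n - m)) (-1)
      = (-1 : ℝ) ^ n * (n.choose m : ℝ) * ((n + m).factorial : ℝ) *
          ((n - m).factorial : ℝ) / (n.factorial : ℝ) := by
  set p : ℝ[X] := X ^ (n + m) * (1 + X) ^ (n - m) with hp
  have hfun : (fun z : ℝ => z ^ (n + m) * (1 + z) ^ (n - m))
      = fun z : ℝ => p.eval z := by
    funext z; simp [hp]
  rw [hfun, iteratedDeriv_polynomial]
  beta_reduce
  -- rewrite iterated derivative via Hasse derivative
  have hhasse : (derivative^[n]) p = n.factorial • Polynomial.hasseDeriv n p := by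
    rw [← Polynomial.factorial_smul_hasseDeriv]; rfl
  rw [hhasse]
  have htaylor : (Polynomial.hasseDeriv n p).eval (-1)
      = (Polynomial.taylor (-1) p).coeff n := (Polynomial.taylor_coeff (r := (-1:ℝ)) (f := p) n).symm
  have hcomp : Polynomial.taylor (-1 : ℝ) p
      = (X + C (-1 : ℝ)) ^ (n + m) * X ^ (n - m) := by
    rw [Polynomial.taylor_apply, hp, mul_comp, pow_comp, pow_comp, X_comp, add_comp,
      one_comp, X_comp, map_neg, map_one]
    ring
  have hcoeff : (Polynomial.taylor (-1 : ℝ) p).coeff n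
      = (-1 : ℝ) ^ n * ((n + m).choose m : ℝ) := by
    rw [hcomp, Polynomial.coeff_mul_X_pow' _ (n - m) n]
    rw [if_pos (Nat.sub_le n m)]
    have h1 : n - (n - m) = m := Nat.sub_sub_self hm
    rw [h1, Polynomial.coeff_X_add_C_pow]
    have h2 : n + m - m = n := by omega
    rw [h2]
  rw [Polynomial.eval_smul, htaylor, hcoeff]
  -- now pure arithmetic
  have hC1 : ((n + m).choose m : ℝ)
      = ((n + m).factorial : ℝ) / ((m.factorial : ℝ) * (n.factorial : ℝ)) := by
    have := Nat.cast_choose ℝ (le_add_self : m ≤ n + m)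
    rwa [Nat.add_sub_cancel] at this
  have hC2 : (n.choose m : ℝ)
      = (n.factorial : ℝ) / ((m.factorial : ℝ) * ((n - m).factorial : ℝ)) :=
    Nat.cast_choose ℝ hm
  have h0 : (n.factorial : ℝ) ≠ 0 := Nat.cast_ne_zero.mpr n.factorial_ne_zero
  have h0m : (m.factorial : ℝ) ≠ 0 := Nat.cast_ne_zero.mpr m.factorial_ne_zero
  have h0nm : ((n - m).factorial : ℝ) ≠ 0 := Nat.cast_ne_zero.mpr (n - m).factorial_ne_zero
  rw [nsmul_eq_mul, hC1, hC2]
  field_simp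
end

section
/- Let ρ^{-1} be the (N+1)×(N+1) Hilbert-type matrix with entries (ρ^{-1})_{jk} = 1/(j+k+1), 0 ≤ j,k ≤ N. Then its inverse has entries ρ_{jk} = (-1)^{j+k} ∑_{m=max(j,k)}^{N} ((j+m)!(k+m)!(2m+1)) / ((j!)^2 (k!)^2 (m-j)!(m-k)!). -/
open Finset

noncomputable def fc (n : ℕ) : ℚ := n.factorial

lemma fc_ne (n : ℕ) : fc n ≠ 0 := by
  simp [fc, Nat.factorial_ne_zero]

lemma fc_succ (n : ℕ) : fc (n + 1) = (n + 1) * fc n := by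
  simp [fc, Nat.factorial_succ]

lemma fc_zero : fc 0 = 1 := by simp [fc]

-- the A0 term
noncomputable def rA (m i : ℕ) : ℚ := (-1) ^ i * fc (i + m) / (fc i ^ 2 * fc (m + 1 - i))

noncomputable def gA (m i : ℕ) : ℚ :=
  (-1) ^ (i + 1) * (i : ℚ) ^ 2 * fc (i + m) / ((m + 1 : ℚ) ^ 2 * fc i ^ 2 * fc (m + 1 - i))

lemma gA_step (m i : ℕ) (h : i ≤ m) : gA m (i + 1) - gA m i = rA m i := by
  obtain ⟨d, rfl⟩ := Nat.exists_eq_add_of_le h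
  unfold gA rA
  have e1 : i + d + 1 - (i + 1) = d := by omega
  have e2 : i + d + 1 - i = d + 1 := by omega
  have e3 : i + 1 + (i + d) = (i + (i + d)) + 1 := by omega
  rw [e1, e2, e3, fc_succ, fc_succ, fc_succ]
  have h1 := fc_ne i
  have h2 := fc_ne d
  have h3 := fc_ne (i + (i + d))
  field_simp
  push_cast; ring

lemma lemA0 (m : ℕ) : ∑ i ∈ range (m + 2), rA m i = 0 := by
  rw [Finset.sum_range_succ]
  have tele : ∑ i ∈ range (m + 1), rA m i = gA m (m + 1) - gA m 0 := by
    rw [← Finset.sum_range_sub (gA m)]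
    exact Finset.sum_congr rfl fun i hi => (gA_step m i (by simpa using Nat.lt_succ_iff.mp (mem_range.mp hi))).symm
  rw [tele]
  have h0 : gA m 0 = 0 := by simp [gA]
  rw [h0]
  unfold gA rA
  have e1 : m + 1 - (m + 1) = 0 := by omega
  rw [e1]
  have h1 := fc_ne (m + 1)
  have h3 := fc_ne (m + 1 + m)
  rw [fc_zero]
  have hm : ((m : ℚ) + 1) ≠ 0 := by positivity
  field_simp
  push_cast; ring

noncomputable def tA (j m i : ℕ) : ℚ :=
  (-1) ^ i * fc (i + m) / (fc i ^ 2 * fc (m - i) * ((j : ℚ) + i + 1))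

noncomputable def cA (j m : ℕ) : ℚ :=
  if m ≤ j then (-1) ^ m * fc j ^ 2 / (fc (j - m) * fc (j + m + 1)) else 0

lemma tA_step (j m i : ℕ) (h : i ≤ m) :
    ((j : ℚ) + m + 2) * tA j (m + 1) i = ((m : ℚ) - j) * tA j m i + 2 * ((m : ℚ) + 1) * rA m i := by
  obtain ⟨d, rfl⟩ := Nat.exists_eq_add_of_le h
  unfold tA rA
  have e1 : i + d + 1 - i = d + 1 := by omega
  have e2 : i + d - i = d := by omega
  have e3 : i + (i + d + 1) = (i + (i + d)) + 1 := by omega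
  rw [e1, e2, e3, fc_succ, fc_succ]
  have h1 := fc_ne i
  have h2 := fc_ne d
  have h3 := fc_ne (i + (i + d))
  have h4 : ((j : ℚ) + i + 1) ≠ 0 := by positivity
  field_simp
  push_cast; ring

lemma tA_last (j m : ℕ) :
    ((j : ℚ) + m + 2) * tA j (m + 1) (m + 1) = 2 * ((m : ℚ) + 1) * rA m (m + 1) := by
  unfold tA rA
  have e1 : m + 1 - (m + 1) = 0 := by omega
  have e2 : m + 1 + (m + 1) = (m + 1 + m) + 1 := by omega
  rw [e1, e2, fc_succ, fc_zero]
  have h1 := fc_ne (m + 1)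
  have h3 := fc_ne (m + 1 + m)
  have h4 : ((j : ℚ) + (m : ℚ) + 1 + 1) ≠ 0 := by positivity
  field_simp
  push_cast; ring

lemma cA_step (j m : ℕ) :
    ((j : ℚ) + m + 2) * cA j (m + 1) = ((m : ℚ) - j) * cA j m := by
  rcases lt_trichotomy j m with h | rfl | h
  · rw [cA, cA, if_neg (by omega), if_neg (by omega)]; ring
  · rw [cA, cA, if_neg (by omega), if_pos le_rfl]; ring
  · have hm1 : m + 1 ≤ j := h
    obtain ⟨e, rfl⟩ := Nat.exists_eq_add_of_le hm1
    rw [cA, cA, if_pos (show m + 1 ≤ m + 1 + e by omega), if_pos (show m ≤ m + 1 + e by omega)]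
    have e1 : m + 1 + e - (m + 1) = e := by omega
    have e2 : m + 1 + e - m = e + 1 := by omega
    have e3 : m + 1 + e + (m + 1) + 1 = (m + 1 + e + m + 1) + 1 := by omega
    rw [e1, e2, e3, fc_succ (m + 1 + e + m + 1), fc_succ e]
    have h1 := fc_ne e
    have h2 := fc_ne (m + 1 + e)
    have h3 := fc_ne (m + 1 + e + m + 1)
    field_simp
    push_cast; ring

lemma lemA (j m : ℕ) : ∑ i ∈ range (m + 1), tA j m i = cA j m := by
  induction m with
  | zero =>
    simp only [Finset.sum_range_one, tA, cA, if_pos (Nat.zero_le j), Nat.add_zero,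
      Nat.sub_zero, Nat.zero_add, Nat.sub_self, fc_zero, fc_succ, pow_zero]
    push_cast
    have h1 := fc_ne j
    have h4 : ((j : ℚ) + 1) ≠ 0 := by positivity
    field_simp
    ring
  | succ m ih =>
    have hne : ((j : ℚ) + m + 2) ≠ 0 := by positivity
    have key : ((j : ℚ) + m + 2) * ∑ i ∈ range (m + 2), tA j (m + 1) i
        = ((m : ℚ) - j) * cA j m := by
      rw [Finset.mul_sum, Finset.sum_range_succ, tA_last]
      have : ∀ i ∈ range (m + 1), ((j : ℚ) + m + 2) * tA j (m + 1) i
          = ((m : ℚ) - j) * tA j m i + 2 * ((m : ℚ) + 1) * rA m i := fun i hi =>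
        tA_step j m i (Nat.lt_succ_iff.mp (mem_range.mp hi))
      rw [Finset.sum_congr rfl this, Finset.sum_add_distrib, ← Finset.mul_sum, ← Finset.mul_sum, ih]
      have hz : ∑ i ∈ range (m + 1), rA m i + rA m (m + 1) = 0 := by
        have := lemA0 m
        rwa [Finset.sum_range_succ] at this
      have : rA m (m + 1) = - ∑ i ∈ range (m + 1), rA m i := by linarith
      rw [this]
      ring
    have := cA_step j m
    field_simp at key
    nlinarith [key, this, sq_nonneg ((j:ℚ) + m + 2)]

noncomputable def bB (j k m : ℕ) : ℚ :=
  (-1) ^ m * (2 * (m : ℚ) + 1) * fc (k + m) / (fc (m - k) * fc (j - m) * fc (j + m + 1))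

noncomputable def gB (j k m : ℕ) : ℚ :=
  (-1) ^ (m + 1) * ((m : ℚ) - k) * ((j : ℚ) + 1 - m) * fc (k + m) /
    (((j : ℚ) - k) * fc (m - k) * fc (j + 1 - m) * fc (j + m))

lemma gB_step (j k m : ℕ) (hk : k ≤ m) (hj : m ≤ j) (hlt : k < j) :
    gB j k (m + 1) - gB j k m = bB j k m := by
  obtain ⟨a, rfl⟩ := Nat.exists_eq_add_of_le hk
  obtain ⟨c, rfl⟩ := Nat.exists_eq_add_of_le hj
  unfold gB bB
  have e1 : k + a - k = a := by omega
  have e2 : k + a + 1 - k = a + 1 := by omega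
  have e3 : k + a + c - (k + a) = c := by omega
  have e4 : k + a + c + 1 - (k + a) = c + 1 := by omega
  have e5 : k + a + c + 1 - (k + a + 1) = c := by omega
  have e6 : k + (k + a + 1) = (k + (k + a)) + 1 := by omega
  have e7 : k + a + c + (k + a + 1) = (k + a + c + (k + a)) + 1 := by omega
  have e8 : k + a + c + (k + a) + 1 = (k + a + c + (k + a)) + 1 := by omega
  rw [e1, e2, e3, e4, e5, e6, e7, e8, fc_succ (k + (k + a)), fc_succ a, fc_succ c,
    fc_succ (k + a + c + (k + a))]
  have h1 := fc_ne a
  have h2 := fc_ne c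
  have h3 := fc_ne (k + (k + a))
  have h4 := fc_ne (k + a + c + (k + a))
  have h5 : ((k : ℚ) + a + c) - k ≠ 0 := by
    have : (0:ℚ) < (a:ℚ) + c := by
      have : 0 < a + c := by omega
      exact_mod_cast this
    nlinarith
  push_cast
  field_simp
  ring

lemma lemB (j k : ℕ) (h : k < j) :
    ∑ m ∈ Finset.Icc k j, bB j k m = 0 := by
  rw [← Finset.Ico_add_one_right_eq_Icc, Finset.sum_Ico_eq_sum_range]
  have hn : j + 1 - k = (j - k) + 1 := by omega
  have step : ∀ t ∈ range (j + 1 - k), bB j k (k + t) = gB j k (k + t + 1) - gB j k (k + t) := by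
    intro t ht
    rw [mem_range] at ht
    exact (gB_step j k (k + t) (by omega) (by omega) h).symm
  rw [Finset.sum_congr rfl step]
  have : ∀ t, gB j k (k + t + 1) = (fun t => gB j k (k + t)) (t + 1) := by intro t; simp [Nat.add_assoc]
  simp only [this]
  rw [Finset.sum_range_sub (fun t => gB j k (k + t))]
  have hk0 : gB j k (k + 0) = 0 := by
    unfold gB; simp
  have hj1 : gB j k (k + (j + 1 - k)) = 0 := by
    have : k + (j + 1 - k) = j + 1 := by omega
    rw [this]
    unfold gB
    push_cast
    simp [sub_self]
  rw [hk0, hj1, sub_zero]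

lemma main_sum (N J K : ℕ) (hJ : J ≤ N) (hK : K ≤ N) :
    ∑ i ∈ range (N + 1), (1 / ((J : ℚ) + i + 1)) *
      ((-1 : ℚ) ^ (i + K) * ∑ m ∈ Finset.Icc (max i K) N,
        (fc (i + m) * fc (K + m) * (2 * (m : ℚ) + 1)) /
          (fc i ^ 2 * fc K ^ 2 * fc (m - i) * fc (m - K)))
    = if J = K then 1 else 0 := by
  -- step 1: per-i rewrite into rectangular double sum with indicator
  have step1 : ∀ i, (1 / ((J : ℚ) + i + 1)) *
      ((-1 : ℚ) ^ (i + K) * ∑ m ∈ Finset.Icc (max i K) N,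
        (fc (i + m) * fc (K + m) * (2 * (m : ℚ) + 1)) /
          (fc i ^ 2 * fc K ^ 2 * fc (m - i) * fc (m - K)))
      = ∑ m ∈ Finset.Icc K N, (if i ≤ m then
          ((-1 : ℚ) ^ K * fc (K + m) * (2 * (m : ℚ) + 1) / (fc K ^ 2 * fc (m - K))) * tA J m i
        else 0) := by
    intro i
    have hfil : Finset.Icc (max i K) N = (Finset.Icc K N).filter (fun m => i ≤ m) := by
      ext m; simp only [Finset.mem_Icc, Finset.mem_filter]; omega
    rw [hfil, Finset.sum_filter, Finset.mul_sum, Finset.mul_sum]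
    refine Finset.sum_congr rfl fun m hm => ?_
    split_ifs with h
    · unfold tA
      have h4 : ((J : ℚ) + i + 1) ≠ 0 := by positivity
      rw [pow_add]
      field_simp
    · simp
  rw [Finset.sum_congr rfl fun i _ => step1 i, Finset.sum_comm]
  -- step 2: inner sum evaluates via lemA
  have step2 : ∀ m ∈ Finset.Icc K N,
      (∑ i ∈ range (N + 1), if i ≤ m then
          ((-1 : ℚ) ^ K * fc (K + m) * (2 * (m : ℚ) + 1) / (fc K ^ 2 * fc (m - K))) * tA J m i
        else 0)
      = ((-1 : ℚ) ^ K * fc (K + m) * (2 * (m : ℚ) + 1) / (fc K ^ 2 * fc (m - K))) * cA J m := by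
    intro m hm
    rw [Finset.mem_Icc] at hm
    rw [← Finset.sum_filter]
    have : (range (N + 1)).filter (fun i => i ≤ m) = range (m + 1) := by
      ext i; simp only [Finset.mem_filter, Finset.mem_range]; omega
    rw [this, ← Finset.mul_sum, lemA]
  rw [Finset.sum_congr rfl step2]
  -- step 3: case split on J vs K
  rcases lt_trichotomy J K with h | rfl | h
  · rw [if_neg (by omega)]
    refine Finset.sum_eq_zero fun m hm => ?_
    rw [Finset.mem_Icc] at hm
    rw [cA, if_neg (by omega), mul_zero]
  · -- diagonal
    rw [if_pos rfl]
    have hsub : ∑ m ∈ Finset.Icc J N, ((-1 : ℚ) ^ J * fc (J + m) * (2 * (m : ℚ) + 1) /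
          (fc J ^ 2 * fc (m - J))) * cA J m
        = ∑ m ∈ Finset.Icc J J, ((-1 : ℚ) ^ J * fc (J + m) * (2 * (m : ℚ) + 1) /
          (fc J ^ 2 * fc (m - J))) * cA J m := by
      refine (Finset.sum_subset (Finset.Icc_subset_Icc_right hJ) fun m hm hm' => ?_).symm
      rw [Finset.mem_Icc] at hm hm'
      rw [cA, if_neg (by omega), mul_zero]
    rw [hsub, Finset.Icc_self, Finset.sum_singleton, cA, if_pos le_rfl, Nat.sub_self]
    have e1 : J + J + 1 = (J + J) + 1 := rfl
    rw [e1, fc_succ, fc_zero]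
    have h1 := fc_ne J
    have h2 := fc_ne (J + J)
    have h3 : ((-1 : ℚ)) ^ J * (-1 : ℚ) ^ J = 1 := by
      rw [← pow_add, ← two_mul, pow_mul]; norm_num
    have h4 : (2 * (J : ℚ) + 1) = ((J : ℚ) + (J : ℚ) + 1) := by ring
    have h5 : ((J : ℚ) + J + 1) ≠ 0 := by positivity
    push_cast
    field_simp
    linear_combination (2 * (J : ℚ) + 1) * h3
  · -- K < J : use lemB
    rw [if_neg (by omega)]
    have hsub : ∑ m ∈ Finset.Icc K N, ((-1 : ℚ) ^ K * fc (K + m) * (2 * (m : ℚ) + 1) /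
          (fc K ^ 2 * fc (m - K))) * cA J m
        = ∑ m ∈ Finset.Icc K J, ((-1 : ℚ) ^ K * fc (K + m) * (2 * (m : ℚ) + 1) /
          (fc K ^ 2 * fc (m - K))) * cA J m := by
      refine (Finset.sum_subset (Finset.Icc_subset_Icc_right hJ) fun m hm hm' => ?_).symm
      rw [Finset.mem_Icc] at hm hm'
      rw [cA, if_neg (by omega), mul_zero]
    rw [hsub]
    have hpt : ∀ m ∈ Finset.Icc K J, ((-1 : ℚ) ^ K * fc (K + m) * (2 * (m : ℚ) + 1) /
          (fc K ^ 2 * fc (m - K))) * cA J m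
        = ((-1 : ℚ) ^ K * fc J ^ 2 / fc K ^ 2) * bB J K m := by
      intro m hm
      rw [Finset.mem_Icc] at hm
      rw [cA, if_pos hm.2, bB]
      have h1 := fc_ne (m - K)
      have h2 := fc_ne (J - m)
      have h3 := fc_ne (J + m + 1)
      have h4 := fc_ne K
      field_simp
    rw [Finset.sum_congr rfl hpt, ← Finset.mul_sum, lemB J K h, mul_zero]

/-- the inverse of the Hilbert matrix `(1/(j+k+1))_{0≤j,k≤N}` has entries
`ρ_{jk} = (-1)^{j+k} ∑_{m=max(j,k)}^N (j+m)!(k+m)!(2m+1)/((j!)²(k!)²(m-j)!(m-k)!)`. -/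
theorem stmt_17 (N : ℕ)
    (Hmat ρ : Matrix (Fin (N + 1)) (Fin (N + 1)) ℚ)
    (hH : ∀ j k : Fin (N + 1), Hmat j k = 1 / (((j : ℕ) : ℚ) + ((k : ℕ) : ℚ) + 1))
    (hρ : ∀ j k : Fin (N + 1), ρ j k =
      (-1 : ℚ) ^ ((j : ℕ) + (k : ℕ)) *
        ∑ m ∈ Finset.Icc (max (j : ℕ) (k : ℕ)) N,
          ((((j : ℕ) + m).factorial : ℚ) * (((k : ℕ) + m).factorial : ℚ) * (2 * (m : ℚ) + 1)) /
            (((j : ℕ).factorial : ℚ) ^ 2 * ((k : ℕ).factorial : ℚ) ^ 2 *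
              ((m - (j : ℕ)).factorial : ℚ) * ((m - (k : ℕ)).factorial : ℚ))) :
    Hmat⁻¹ = ρ := by
  have key : Hmat * ρ = 1 := by
    ext j k
    rw [Matrix.mul_apply, Matrix.one_apply]
    have hmain := main_sum N (j : ℕ) (k : ℕ) (Nat.lt_succ_iff.mp j.isLt) (Nat.lt_succ_iff.mp k.isLt)
    have hsum : ∑ i : Fin (N + 1), Hmat j i * ρ i k
        = ∑ i ∈ range (N + 1), (1 / (((j : ℕ) : ℚ) + i + 1)) *
            ((-1 : ℚ) ^ (i + (k : ℕ)) * ∑ m ∈ Finset.Icc (max i (k : ℕ)) N,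
              (fc (i + m) * fc ((k : ℕ) + m) * (2 * (m : ℚ) + 1)) /
                (fc i ^ 2 * fc (k : ℕ) ^ 2 * fc (m - i) * fc (m - (k : ℕ)))) := by
      rw [← Fin.sum_univ_eq_sum_range]
      refine Finset.sum_congr rfl fun i _ => ?_
      rw [hH, hρ]
      simp only [fc]
    rw [hsum, hmain]
    by_cases h : j = k
    · rw [if_pos h, if_pos (by rw [h])]
    · rw [if_neg h, if_neg (fun hc => h (Fin.ext hc))]
  rw [Matrix.inv_eq_right_inv key]
end
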